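/- Let D be a real M×M skew-symmetric matrix, Y⁰ ∈ ℝ^M, r = 2, γ ∈ (0,1). Define Ỹ₂(t) = Y⁰ + t D Y⁰ + (t²/2) D² Y⁰ + (t³/(2(2+γ))) D³ Y⁰. If τ‖D‖ ≤ √(2(4-γ²)/3), then ‖Ỹ₂(t)‖ ≤ ‖Y⁰‖ for all t ∈ [0, τ]. -/

import Mathlib

/-!
For a skew-adjoint `A` the even part `y + b A²y` and the odd part `a Ay + c A³y` of
`Ỹ₂ = y + a Ay + b A²y + c A³y` are orthogonal, and `⟪x, A²x⟫ = -‖Ax‖²`, so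
`‖Ỹ₂‖² = ‖y‖² + (a² - 2b)‖Ay‖² + (b² - 2ac)‖A²y‖² + c²‖A³y‖²`.
The Taylor coefficients `a = t`, `b = t²/2` cancel the first correction, and with
`‖A³y‖ ≤ ‖A‖‖A²y‖` the CFL bound makes the remaining two at most
`-t⁴(2 - γ)/(12(2 + γ)) ‖A²y‖² ≤ 0`; the stabilizing term `c = t³/(2(2 + γ))` is what makes
`b² - 2ac` negative.
-/

open Matrix

/-- View a plain vector in `Fin M → ℝ` as an element of Euclidean space. -/
noncomputable def vecE {M : ℕ} (v : Fin M → ℝ) : EuclideanSpace ℝ (Fin M) :=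
  (WithLp.equiv 2 (Fin M → ℝ)).symm v

open scoped RealInnerProductSpace

lemma Matrix.toEuclideanCLM_mem_skewAdjoint {n : Type*} [Fintype n] [DecidableEq n]
    {D : Matrix n n ℝ} (hD : D + Dᵀ = 0) :
    toEuclideanCLM (𝕜 := ℝ) D ∈ skewAdjoint (EuclideanSpace ℝ n →L[ℝ] EuclideanSpace ℝ n) := by
  rw [skewAdjoint.mem_iff, ← map_star, star_eq_conjTranspose,
    conjTranspose_eq_transpose_of_trivial, eq_neg_of_add_eq_zero_right hD, map_neg]

lemma vecE_mulVec {M : ℕ} (D : Matrix (Fin M) (Fin M) ℝ) (x : EuclideanSpace ℝ (Fin M)) :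
    vecE (D *ᵥ x) = toEuclideanCLM (𝕜 := ℝ) D x :=
  rfl

namespace skewAdjoint

variable {E : Type*} [NormedAddCommGroup E] [InnerProductSpace ℝ E] [CompleteSpace E]
  {A : E →L[ℝ] E}

lemma inner_apply_left (hA : A ∈ skewAdjoint (E →L[ℝ] E)) (x y : E) :
    ⟪A x, y⟫ = -⟪x, A y⟫ := by
  rw [← ContinuousLinearMap.adjoint_inner_right, ← ContinuousLinearMap.star_eq_adjoint,
    skewAdjoint.mem_iff.mp hA, _root_.neg_apply, inner_neg_right]

lemma inner_self_apply (hA : A ∈ skewAdjoint (E →L[ℝ] E)) (x : E) :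
    ⟪x, A x⟫ = 0 := by
  have h := inner_apply_left hA x x
  rw [real_inner_comm] at h
  linarith

lemma inner_apply_apply (hA : A ∈ skewAdjoint (E →L[ℝ] E)) (x : E) :
    ⟪x, A (A x)⟫ = -‖A x‖ ^ 2 := by
  rw [← real_inner_self_eq_norm_sq, inner_apply_left hA, neg_neg]

lemma norm_smul_add_smul_apply_apply_sq (hA : A ∈ skewAdjoint (E →L[ℝ] E)) (x : E) (p q : ℝ) :
    ‖p • x + q • A (A x)‖ ^ 2 =
      p ^ 2 * ‖x‖ ^ 2 - 2 * p * q * ‖A x‖ ^ 2 + q ^ 2 * ‖A (A x)‖ ^ 2 := by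
  rw [norm_add_sq_real, real_inner_smul_left, real_inner_smul_right, inner_apply_apply hA,
    norm_smul, norm_smul, mul_pow, mul_pow, Real.norm_eq_abs, Real.norm_eq_abs, sq_abs, sq_abs]
  ring

lemma norm_add_smul_pow_sq (hA : A ∈ skewAdjoint (E →L[ℝ] E)) (y : E) (a b c : ℝ) :
    ‖y + a • A y + b • (A ^ 2) y + c • (A ^ 3) y‖ ^ 2 =
      ‖y‖ ^ 2 + (a ^ 2 - 2 * b) * ‖A y‖ ^ 2 + (b ^ 2 - 2 * a * c) * ‖(A ^ 2) y‖ ^ 2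
        + c ^ 2 * ‖(A ^ 3) y‖ ^ 2 := by
  have hsplit : y + a • A y + b • (A ^ 2) y + c • (A ^ 3) y =
      ((1 : ℝ) • y + b • A (A y)) + (a • A y + c • A (A (A y))) := by
    simp only [pow_succ, pow_zero, one_mul, mul_apply_eq_comp, one_smul]
    abel
  have horth : ⟪(1 : ℝ) • y + b • A (A y), a • A y + c • A (A (A y))⟫ = 0 := by
    have h₁ : ⟪y, A (A (A y))⟫ = 0 := by
      rw [← neg_eq_zero, ← inner_apply_left hA, inner_self_apply hA]
    have h₂ : ⟪A (A y), A y⟫ = 0 := by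
      rw [real_inner_comm, inner_self_apply hA]
    simp only [inner_add_left, inner_add_right, real_inner_smul_left, real_inner_smul_right,
      inner_self_apply hA, h₁, h₂]
    ring
  rw [hsplit, norm_add_sq_real, horth, norm_smul_add_smul_apply_apply_sq hA,
    norm_smul_add_smul_apply_apply_sq hA]
  simp only [pow_succ, pow_zero, one_mul, mul_apply_eq_comp]
  ring

lemma norm_add_smul_pow_le (hA : A ∈ skewAdjoint (E →L[ℝ] E)) (y : E)
    {a b c : ℝ} (hab : a ^ 2 = 2 * b) (hbc : b ^ 2 - 2 * a * c + c ^ 2 * ‖A‖ ^ 2 ≤ 0) :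
    ‖y + a • A y + b • (A ^ 2) y + c • (A ^ 3) y‖ ≤ ‖y‖ := by
  have hA3 : ‖(A ^ 3) y‖ ^ 2 ≤ ‖A‖ ^ 2 * ‖(A ^ 2) y‖ ^ 2 := by
    rw [← mul_pow, pow_succ' A 2, mul_apply_eq_comp]
    gcongr
    exact A.le_opNorm _
  have hsq : ‖y + a • A y + b • (A ^ 2) y + c • (A ^ 3) y‖ ^ 2 ≤ ‖y‖ ^ 2 := by
    rw [norm_add_smul_pow_sq hA, hab, sub_self, zero_mul, add_zero]
    linarith [mul_le_mul_of_nonneg_left hA3 (sq_nonneg c),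
      mul_nonpos_of_nonpos_of_nonneg hbc (sq_nonneg ‖(A ^ 2) y‖)]
  exact (pow_le_pow_iff_left₀ (norm_nonneg _) (norm_nonneg _) two_ne_zero).mp hsq

end skewAdjoint

lemma stabilized_coeff_nonpos {γ t s : ℝ} (hγ₀ : -2 < γ) (hγ₂ : γ ≤ 2)
    (hts : (t * s) ^ 2 ≤ 2 * (4 - γ ^ 2) / 3) :
    (t ^ 2 / 2) ^ 2 - 2 * t * (t ^ 3 / (2 * (2 + γ))) + (t ^ 3 / (2 * (2 + γ))) ^ 2 * s ^ 2
      ≤ 0 := by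
  have h2γ : 0 < 2 + γ := by linarith
  have h2γ' : 0 ≤ 2 - γ := by linarith
  calc _ = t ^ 4 / (4 * (2 + γ) ^ 2) * ((t * s) ^ 2 - 2 * (4 - γ ^ 2) / 3)
        - t ^ 4 * (2 - γ) / (12 * (2 + γ)) := by
          field_simp
          ring
    _ ≤ 0 := by
      linarith [mul_nonpos_of_nonneg_of_nonpos (by positivity : 0 ≤ t ^ 4 / (4 * (2 + γ) ^ 2))
        (sub_nonpos.mpr hts), (by positivity : 0 ≤ t ^ 4 * (2 - γ) / (12 * (2 + γ)))]

theorem strong_stability_r_two_general {M : ℕ} (D : Matrix (Fin M) (Fin M) ℝ)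
    (hD : D + D.transpose = 0) (Y0 : EuclideanSpace ℝ (Fin M)) (γ : ℝ)
    (hγ : γ ∈ Set.Ioo (0 : ℝ) 1) (τ : ℝ)
    (hCFL : τ * ‖Matrix.toEuclideanCLM (𝕜 := ℝ) D‖ ≤ Real.sqrt (2 * (4 - γ ^ 2) / 3)) :
    ∀ t ∈ Set.Icc (0 : ℝ) τ,
      ‖Y0 + t • vecE (D.mulVec Y0) + (t ^ 2 / 2) • vecE ((D ^ 2).mulVec Y0)
          + (t ^ 3 / (2 * (2 + γ))) • vecE ((D ^ 3).mulVec Y0)‖ ≤ ‖Y0‖ := by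
  rintro t ⟨ht₀, htτ⟩
  obtain ⟨hγ₀, hγ₁⟩ := hγ
  set A := toEuclideanCLM (𝕜 := ℝ) D
  have hCFL_t : (t * ‖A‖) ^ 2 ≤ 2 * (4 - γ ^ 2) / 3 := by
    rw [← Real.le_sqrt (by positivity) (by nlinarith)]
    exact (mul_le_mul_of_nonneg_right htτ (norm_nonneg A)).trans hCFL
  rw [vecE_mulVec, vecE_mulVec, vecE_mulVec, map_pow, map_pow]
  exact skewAdjoint.norm_add_smul_pow_le (toEuclideanCLM_mem_skewAdjoint hD) Y0 (by ring)
    (stabilized_coeff_nonpos (by linarith) (by linarith) hCFL_t)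

theorem strong_stability_r_two {M : ℕ} (D : Matrix (Fin M) (Fin M) ℝ)
    (hD : D + D.transpose = 0) (Y0 : EuclideanSpace ℝ (Fin M)) (γ : ℝ)
    (hγ : γ ∈ Set.Ioo (0 : ℝ) 1) (τ : ℝ) (hτ : 0 ≤ τ)
    (hCFL : τ * ‖Matrix.toEuclideanCLM (𝕜 := ℝ) D‖ ≤ Real.sqrt (2 * (4 - γ ^ 2) / 3)) :
    ∀ t ∈ Set.Icc (0 : ℝ) τ,
      ‖Y0 + t • vecE (D.mulVec Y0) + (t ^ 2 / 2) • vecE ((D ^ 2).mulVec Y0)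
          + (t ^ 3 / (2 * (2 + γ))) • vecE ((D ^ 3).mulVec Y0)‖ ≤ ‖Y0‖ :=
  strong_stability_r_two_general D hD Y0 γ hγ τ hCFL
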